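/- arXiv:2406.03347 — 5 statements merged into one kernel-verified Lean document; each statement's English description precedes it below -/
import Mathlib

section
/- For every real number t > 0, the set E(t) has a least element, and this minimum equals t(2 + t⁻³) when t⁻³ ≤ 6, and equals 8t when t⁻³ ≥ 6. -/
/-- `γ_n(t) = t·n·(2 + n·t⁻³)` -/
noncomputable def gammaF (t : ℝ) (n : ℕ) : ℝ := t * n * (2 + n * (t ^ 3)⁻¹)

/-- `α_k(t) = t·(k(k+2) − 1 + t⁻³)` -/
noncomputable def alphaF (t : ℝ) (k : ℕ) : ℝ := t * (k * (k + 2) - 1 + (t ^ 3)⁻¹)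

/-- `β_l(t) = t·l·(l+2)` -/
noncomputable def betaF (t : ℝ) (l : ℕ) : ℝ := t * l * (l + 2)

/-- The set `E(t)` of nonzero eigenvalues of the unit-volume Berger sphere Laplacian. -/
def EV (t : ℝ) : Set ℝ :=
  {x | ∃ n : ℕ, 1 ≤ n ∧ x = gammaF t n} ∪
  {x | ∃ k : ℕ, Odd k ∧ 1 ≤ k ∧ x = alphaF t k} ∪
  {x | ∃ l : ℕ, Even l ∧ 2 ≤ l ∧ x = betaF t l}

theorem alphaF_one (t : ℝ) : alphaF t 1 = gammaF t 1 := by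
  simp only [alphaF, gammaF]
  ring

theorem gammaF_one (t : ℝ) : gammaF t 1 = t * (2 + (t ^ 3)⁻¹) := by
  simp [gammaF]

theorem betaF_two (t : ℝ) : betaF t 2 = 8 * t := by
  norm_num [betaF]
  ring

theorem gammaF_one_mem_EV (t : ℝ) : gammaF t 1 ∈ EV t :=
  Or.inl (Or.inl ⟨1, le_rfl, rfl⟩)

theorem betaF_two_mem_EV (t : ℝ) : betaF t 2 ∈ EV t :=
  Or.inr ⟨2, even_two, le_rfl, rfl⟩

section

variable {t : ℝ}

theorem gammaF_monotone (ht : 0 ≤ t) : Monotone (gammaF t) := by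
  intro m n hmn
  unfold gammaF
  gcongr

theorem alphaF_monotone (ht : 0 ≤ t) : Monotone (alphaF t) := by
  intro m n hmn
  unfold alphaF
  gcongr

theorem betaF_monotone (ht : 0 ≤ t) : Monotone (betaF t) := by
  intro m n hmn
  unfold betaF
  gcongr

/-- Each of the three families is monotone in its index, so only its first member competes,
and `α₁ = γ₁`. -/
theorem isLeast_EV (ht : 0 ≤ t) : IsLeast (EV t) (min (gammaF t 1) (betaF t 2)) := by
  refine ⟨?_, ?_⟩
  · rcases min_choice (gammaF t 1) (betaF t 2) with h | h <;> rw [h]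
    exacts [gammaF_one_mem_EV t, betaF_two_mem_EV t]
  · rintro x ((⟨n, hn, rfl⟩ | ⟨k, -, hk, rfl⟩) | ⟨l, -, hl, rfl⟩)
    · exact (min_le_left _ _).trans (gammaF_monotone ht hn)
    · exact (min_le_left _ _).trans ((alphaF_one t).symm.trans_le (alphaF_monotone ht hk))
    · exact (min_le_right _ _).trans (betaF_monotone ht hl)

theorem gammaF_one_le_betaF_two_iff (ht : 0 < t) :
    gammaF t 1 ≤ betaF t 2 ↔ (t ^ 3)⁻¹ ≤ 6 := by
  rw [gammaF_one, betaF_two, show 8 * t = t * (2 + 6) by ring, mul_le_mul_iff_right₀ ht,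
    add_le_add_iff_left]

theorem betaF_two_le_gammaF_one_iff (ht : 0 < t) :
    betaF t 2 ≤ gammaF t 1 ↔ 6 ≤ (t ^ 3)⁻¹ := by
  rw [gammaF_one, betaF_two, show 8 * t = t * (2 + 6) by ring, mul_le_mul_iff_right₀ ht,
    add_le_add_iff_left]

end

theorem berger_spectrum_min (t : ℝ) (ht : 0 < t) :
    ∃ m : ℝ, IsLeast (EV t) m ∧
      ((t ^ 3)⁻¹ ≤ 6 → m = t * (2 + (t ^ 3)⁻¹)) ∧
      (6 ≤ (t ^ 3)⁻¹ → m = 8 * t) := by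
  refine ⟨_, isLeast_EV ht.le, fun h => ?_, fun h => ?_⟩
  · rw [min_eq_left ((gammaF_one_le_betaF_two_iff ht).2 h), gammaF_one]
  · rw [min_eq_right ((betaF_two_le_gammaF_one_iff ht).2 h), betaF_two]
end

section
/- For every real number t > 0, define V₆(t) = 5t(2 + 5t⁻³) if t⁻³ ≤ 1/6, V₆(t) = t(14 + t⁻³) if 1/6 ≤ t⁻³ ≤ 10, and V₆(t) = 24t if t⁻³ ≥ 10. Then V₆(t) ∈ E(t), and every element e of E(t) with e ∉ {γ₁(t), γ₂(t), γ₃(t), γ₄(t), 8t} satisfies e ≥ V₆(t). -/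
lemma berger_key (t : ℝ) (ht : 0 < t) (V : ℝ)
    (h1 : V ≤ t * (10 + 25 * (t ^ 3)⁻¹))
    (h2 : V ≤ t * (14 + (t ^ 3)⁻¹))
    (h3 : V ≤ 24 * t) :
    ∀ e ∈ EV t, e ∉ ({gammaF t 1, gammaF t 2, gammaF t 3, gammaF t 4, 8 * t} : Set ℝ) → V ≤ e := by
  have hs : 0 < (t ^ 3)⁻¹ := by positivity
  rintro e ((⟨n, hn1, rfl⟩ | ⟨k, hk, hk1, rfl⟩) | ⟨l, hl, hl2, rfl⟩) hne <;>
    simp only [Set.mem_insert_iff, Set.mem_singleton_iff, not_or] at hne <;>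
    obtain ⟨e1, e2, e3, e4, e5⟩ := hne
  · rcases lt_or_ge n 5 with h5 | h5
    · interval_cases n <;> simp_all
    · have hn : (5 : ℝ) ≤ (n : ℝ) := by exact_mod_cast h5
      unfold gammaF
      nlinarith [mul_nonneg ht.le (sub_nonneg.2 hn),
        mul_nonneg (mul_nonneg (mul_nonneg ht.le hs.le) (sub_nonneg.2 hn))
          (by linarith : (0:ℝ) ≤ (n : ℝ) + 5)]
  · by_cases hk1' : k = 1
    · subst hk1'
      exact absurd (by unfold alphaF gammaF; push_cast; ring) e1
    · have hk3 : 3 ≤ k := by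
        obtain ⟨m, rfl⟩ := hk
        omega
      have hk3' : (3 : ℝ) ≤ (k : ℝ) := by exact_mod_cast hk3
      unfold alphaF
      nlinarith [mul_nonneg (mul_nonneg ht.le (sub_nonneg.2 hk3'))
        (by linarith : (0:ℝ) ≤ (k : ℝ) + 5)]
  · by_cases hl2' : l = 2
    · subst hl2'
      exact absurd (by unfold betaF; push_cast; ring) e5
    · have hl4 : 4 ≤ l := by
        obtain ⟨m, rfl⟩ := hl
        omega
      have hl4' : (4 : ℝ) ≤ (l : ℝ) := by exact_mod_cast hl4
      unfold betaF
      nlinarith [mul_nonneg (mul_nonneg ht.le (sub_nonneg.2 hl4'))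
        (by linarith : (0:ℝ) ≤ (l : ℝ) + 6)]

theorem berger_lambda6 (t : ℝ) (ht : 0 < t) :
    ∃ V : ℝ,
      ((t ^ 3)⁻¹ ≤ 1 / 6 → V = 5 * t * (2 + 5 * (t ^ 3)⁻¹)) ∧
      (1 / 6 ≤ (t ^ 3)⁻¹ ∧ (t ^ 3)⁻¹ ≤ 10 → V = t * (14 + (t ^ 3)⁻¹)) ∧
      (10 ≤ (t ^ 3)⁻¹ → V = 24 * t) ∧
      V ∈ EV t ∧
      ∀ e ∈ EV t, e ∉ ({gammaF t 1, gammaF t 2, gammaF t 3, gammaF t 4, 8 * t} : Set ℝ) → V ≤ e := by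
  have hs : 0 < (t ^ 3)⁻¹ := by positivity
  by_cases hA : (t ^ 3)⁻¹ ≤ 1 / 6
  · refine ⟨gammaF t 5, ?_, ?_, ?_, ?_, ?_⟩
    · intro _; unfold gammaF; push_cast; ring
    · rintro ⟨hB, _⟩
      have : (t ^ 3)⁻¹ = 1 / 6 := le_antisymm hA hB
      unfold gammaF; push_cast; rw [this]; ring
    · intro hC; linarith
    · exact Or.inl (Or.inl ⟨5, by norm_num, rfl⟩)
    · refine berger_key t ht _ ?_ ?_ ?_ <;> unfold gammaF <;> push_cast <;> nlinarith
  · by_cases hB : (t ^ 3)⁻¹ ≤ 10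
    · refine ⟨alphaF t 3, ?_, ?_, ?_, ?_, ?_⟩
      · intro h; linarith
      · intro _; unfold alphaF; push_cast; ring
      · intro hC
        have : (t ^ 3)⁻¹ = 10 := le_antisymm hB hC
        unfold alphaF; push_cast; rw [this]; ring
      · exact Or.inl (Or.inr ⟨3, by decide, by norm_num, rfl⟩)
      · refine berger_key t ht _ ?_ ?_ ?_ <;> unfold alphaF <;> push_cast <;> nlinarith
    · refine ⟨betaF t 4, ?_, ?_, ?_, ?_, ?_⟩
      · intro h; linarith
      · rintro ⟨_, h⟩; linarith
      · intro _; unfold betaF; push_cast; ring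
      · exact Or.inr ⟨4, by decide, by norm_num, rfl⟩
      · refine berger_key t ht _ ?_ ?_ ?_ <;> unfold betaF <;> push_cast <;> nlinarith
end

section
/- For every real number t > 0, define V₇(t) = 6t(2 + 6t⁻³) if t⁻³ ≤ 2/35, V₇(t) = t(14 + t⁻³) if 2/35 ≤ t⁻³ ≤ 10, and V₇(t) = 24t if t⁻³ ≥ 10. Then V₇(t) ∈ E(t), and every element e of E(t) with e ∉ {γ₁(t), γ₂(t), γ₃(t), γ₄(t), γ₅(t), 8t} satisfies e ≥ V₇(t). -/
theorem berger_lambda7 (t : ℝ) (ht : 0 < t) :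
    ∃ V : ℝ,
      ((t ^ 3)⁻¹ ≤ 2 / 35 → V = 6 * t * (2 + 6 * (t ^ 3)⁻¹)) ∧
      (2 / 35 ≤ (t ^ 3)⁻¹ ∧ (t ^ 3)⁻¹ ≤ 10 → V = t * (14 + (t ^ 3)⁻¹)) ∧
      (10 ≤ (t ^ 3)⁻¹ → V = 24 * t) ∧
      V ∈ EV t ∧
      ∀ e ∈ EV t, e ∉ ({gammaF t 1, gammaF t 2, gammaF t 3, gammaF t 4, gammaF t 5, 8 * t} : Set ℝ) → V ≤ e := by
  have hs : (0:ℝ) < (t ^ 3)⁻¹ := by positivity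
  set s : ℝ := (t ^ 3)⁻¹ with hsdef
  have hg6 : gammaF t 6 = t * (12 + 36 * s) := by unfold gammaF; push_cast; ring
  have ha3 : alphaF t 3 = t * (14 + s) := by unfold alphaF; push_cast; ring
  have hb4 : betaF t 4 = 24 * t := by unfold betaF; push_cast; ring
  refine ⟨min (min (gammaF t 6) (alphaF t 3)) (betaF t 4), ?_, ?_, ?_, ?_, ?_⟩
  · intro h
    have h1 : gammaF t 6 ≤ alphaF t 3 := by rw [hg6, ha3]; nlinarith
    have h2 : gammaF t 6 ≤ betaF t 4 := by rw [hg6, hb4]; nlinarith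
    rw [min_eq_left h1, min_eq_left h2, hg6]; ring
  · rintro ⟨h1, h2⟩
    have ha1 : alphaF t 3 ≤ gammaF t 6 := by rw [hg6, ha3]; nlinarith
    have ha2 : alphaF t 3 ≤ betaF t 4 := by rw [ha3, hb4]; nlinarith
    rw [min_eq_right ha1, min_eq_left ha2, ha3]
  · intro h
    have hb1 : betaF t 4 ≤ gammaF t 6 := by rw [hg6, hb4]; nlinarith
    have hb2 : betaF t 4 ≤ alphaF t 3 := by rw [ha3, hb4]; nlinarith
    rw [min_eq_right (le_min hb1 hb2), hb4]
  · have m1 : gammaF t 6 ∈ EV t := Or.inl (Or.inl ⟨6, by norm_num, rfl⟩)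
    have m2 : alphaF t 3 ∈ EV t := Or.inl (Or.inr ⟨3, ⟨1, rfl⟩, by norm_num, rfl⟩)
    have m3 : betaF t 4 ∈ EV t := Or.inr ⟨4, ⟨2, rfl⟩, by norm_num, rfl⟩
    rcases min_cases (min (gammaF t 6) (alphaF t 3)) (betaF t 4) with ⟨h, -⟩ | ⟨h, -⟩
    · rw [h]
      rcases min_cases (gammaF t 6) (alphaF t 3) with ⟨h', -⟩ | ⟨h', -⟩ <;> rw [h'] <;>
        assumption
    · rw [h]; exact m3
  · intro e he hne
    rcases he with (⟨n, hn, rfl⟩ | ⟨k, hk, hk1, rfl⟩) | ⟨l, hl, hl2, rfl⟩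
    · by_cases h5 : n ≤ 5
      · exfalso; apply hne; interval_cases n <;> simp
      · have h6 : (6:ℝ) ≤ (n:ℝ) := by exact_mod_cast Nat.le_of_lt_succ (by omega)
        have : gammaF t 6 ≤ gammaF t n := by
          unfold gammaF; push_cast
          have key : (0:ℝ) ≤ t * (((n:ℝ) - 6) * (2 + (t ^ 3)⁻¹ * ((n:ℝ) + 6))) :=
            mul_nonneg ht.le (mul_nonneg (by linarith) (by nlinarith))
          nlinarith [key]
        calc min (min (gammaF t 6) (alphaF t 3)) (betaF t 4) ≤ gammaF t 6 :=
              le_trans (min_le_left _ _) (min_le_left _ _)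
          _ ≤ gammaF t n := this
    · have : k = 1 ∨ 3 ≤ k := by rcases hk with ⟨m, rfl⟩; omega
      rcases this with rfl | h3
      · exfalso; apply hne
        have : alphaF t 1 = gammaF t 1 := by unfold alphaF gammaF; push_cast; ring
        rw [this]; simp
      · have h3' : (3:ℝ) ≤ (k:ℝ) := by exact_mod_cast h3
        have : alphaF t 3 ≤ alphaF t k := by
          unfold alphaF; push_cast
          have key : (0:ℝ) ≤ t * (((k:ℝ) - 3) * ((k:ℝ) + 5)) :=
            mul_nonneg ht.le (mul_nonneg (by linarith) (by linarith))
          nlinarith [key]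
        calc min (min (gammaF t 6) (alphaF t 3)) (betaF t 4) ≤ alphaF t 3 :=
              le_trans (min_le_left _ _) (min_le_right _ _)
          _ ≤ alphaF t k := this
    · have : l = 2 ∨ 4 ≤ l := by rcases hl with ⟨m, rfl⟩; omega
      rcases this with rfl | h4
      · exfalso; apply hne
        have : betaF t 2 = 8 * t := by unfold betaF; push_cast; ring
        rw [this]; simp
      · have h4' : (4:ℝ) ≤ (l:ℝ) := by exact_mod_cast h4
        have : betaF t 4 ≤ betaF t l := by
          unfold betaF; push_cast
          have key : (0:ℝ) ≤ t * (((l:ℝ) - 4) * ((l:ℝ) + 6)) :=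
            mul_nonneg ht.le (mul_nonneg (by linarith) (by linarith))
          nlinarith [key]
        calc min (min (gammaF t 6) (alphaF t 3)) (betaF t 4) ≤ betaF t 4 := min_le_right _ _
          _ ≤ betaF t l := this
end

section
/- For every real number t > 0, define V₈(t) = t(14 + t⁻³) if t⁻³ ≤ 10 and V₈(t) = 24t if t⁻³ ≥ 10. Then V₈(t) ∈ E(t), and every element e of E(t) with e ∉ {γ₁(t), γ₂(t), γ₃(t), γ₄(t), γ₅(t), γ₆(t), 8t} satisfies e ≥ V₈(t). -/
/-! The candidate is `V₈(t) = min (α₃(t), β₄(t))`: `α₃(t) = t(14 + t⁻³)` and `β₄(t) = 24t`, and the two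
cases of the definition of `V₈` are exactly the two ways this minimum can fall. All three families are
increasing in their index, and `γ₇ ≥ α₃`, so any element of `E(t)` outside the excluded list is
`γₙ` with `n ≥ 7`, `αₖ` with `k ≥ 3` (as `α₁ = γ₁`) or `βₗ` with `l ≥ 4` (as `β₂ = 8t`). -/

theorem gammaF_mono {t : ℝ} (ht : 0 ≤ t) : Monotone (gammaF t) := by
  intro m n hmn
  have hmn' : (m : ℝ) ≤ n := by exact_mod_cast hmn
  unfold gammaF
  gcongr

theorem alphaF_mono {t : ℝ} (ht : 0 ≤ t) : Monotone (alphaF t) := by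
  intro m n hmn
  have hmn' : (m : ℝ) ≤ n := by exact_mod_cast hmn
  unfold alphaF
  gcongr

theorem betaF_mono {t : ℝ} (ht : 0 ≤ t) : Monotone (betaF t) := by
  intro m n hmn
  have hmn' : (m : ℝ) ≤ n := by exact_mod_cast hmn
  unfold betaF
  gcongr

theorem alphaF_three_le_gammaF_seven {t : ℝ} (ht : 0 ≤ t) : alphaF t 3 ≤ gammaF t 7 := by
  have : 0 ≤ t * (t ^ 3)⁻¹ := by positivity
  unfold alphaF gammaF
  push_cast
  nlinarith

theorem alphaF_three (t : ℝ) : alphaF t 3 = t * (14 + (t ^ 3)⁻¹) := by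
  unfold alphaF
  push_cast
  ring

theorem betaF_four (t : ℝ) : betaF t 4 = 24 * t := by
  unfold betaF
  push_cast
  ring

theorem berger_lambda8 (t : ℝ) (ht : 0 < t) :
    ∃ V : ℝ,
      ((t ^ 3)⁻¹ ≤ 10 → V = t * (14 + (t ^ 3)⁻¹)) ∧
      (10 ≤ (t ^ 3)⁻¹ → V = 24 * t) ∧
      V ∈ EV t ∧
      ∀ e ∈ EV t, e ∉ ({gammaF t 1, gammaF t 2, gammaF t 3, gammaF t 4, gammaF t 5, gammaF t 6, 8 * t} : Set ℝ) → V ≤ e := by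
  refine ⟨min (alphaF t 3) (betaF t 4), fun h ↦ ?_, fun h ↦ ?_, ?_, ?_⟩
  · rw [alphaF_three, betaF_four, min_eq_left (by nlinarith)]
  · rw [alphaF_three, betaF_four, min_eq_right (by nlinarith)]
  · rcases min_choice (alphaF t 3) (betaF t 4) with h | h <;> rw [h]
    · exact Or.inl (Or.inr ⟨3, by decide, by norm_num, rfl⟩)
    · exact Or.inr ⟨4, by decide, by norm_num, rfl⟩
  rintro e ((⟨n, hn, rfl⟩ | ⟨k, hk, hk1, rfl⟩) | ⟨l, hl, hl2, rfl⟩) hexcl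
  · have hn7 : 7 ≤ n := by
      by_contra! hn7
      interval_cases n <;> simp at hexcl
    exact (min_le_left _ _).trans
      ((alphaF_three_le_gammaF_seven ht.le).trans (gammaF_mono ht.le hn7))
  · have hk3 : 3 ≤ k := by
      obtain ⟨m, rfl⟩ := hk
      rcases m with _ | m
      · simp [alphaF_one] at hexcl
      · omega
    exact (min_le_left _ _).trans (alphaF_mono ht.le hk3)
  · have hl4 : 4 ≤ l := by
      obtain ⟨m, rfl⟩ := hl
      rcases m with _ | _ | m
      · omega
      · simp [betaF_two] at hexcl
      · omega
    exact (min_le_right _ _).trans (betaF_mono ht.le hl4)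
end

section
/- For every integer p ≥ 1 and every integer k ≥ 2, the real vector space H_k(ℝ^{p+1}) of harmonic homogeneous polynomials of degree k in p+1 variables has dimension C(k+p, p) − C(k+p−2, p), where C(m, j) denotes the binomial coefficient. (These are the eigenspaces of the Laplacian on the round p-sphere for the eigenvalue k(k+p−1), obtained by restriction from ℝ^{p+1}.) -/
open MvPolynomial

/-- The Laplacian on polynomials in `n` variables as a linear map. -/
noncomputable def polyLaplacianLM (n : ℕ) :
    MvPolynomial (Fin n) ℝ →ₗ[ℝ] MvPolynomial (Fin n) ℝ :=
  ∑ i : Fin n, ((pderiv i : Derivation ℝ (MvPolynomial (Fin n) ℝ) _).toLinearMap ∘ₗ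
    (pderiv i : Derivation ℝ (MvPolynomial (Fin n) ℝ) _).toLinearMap)

/-- The space `H_k(ℝ^{p+1})` of harmonic homogeneous polynomials of degree `k`
in `p+1` variables. -/
noncomputable def harmonicHomogeneous (p k : ℕ) :
    Submodule ℝ (MvPolynomial (Fin (p + 1)) ℝ) :=
  homogeneousSubmodule (Fin (p + 1)) ℝ k ⊓ LinearMap.ker (polyLaplacianLM (p + 1))

/-!
Multiplication by `r² = ∑ Xᵢ²` is adjoint to the Laplacian `Δ` for the Fischer inner product
`⟨f, g⟩ = ∑ₘ m! fₘ gₘ`, because `Xᵢ` is adjoint to `∂ᵢ`; this inner product is positive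
definite. Hence `Δ (r² f) ≠ 0` for `f ≠ 0`, so `Δ` maps the homogeneous polynomials of degree
`d + 2` onto those of degree `d`, with the harmonic ones as kernel. Counting monomials, the
homogeneous polynomials of degree `k` in `p + 1` variables have dimension `C(k + p, p)`, and
rank–nullity gives the formula.
-/

namespace Finsupp

variable {σ : Type*}

def factorial (m : σ →₀ ℕ) : ℕ := m.prod fun _ e => e.factorial

theorem factorial_pos (m : σ →₀ ℕ) : 0 < m.factorial :=
  Finset.prod_pos fun _ _ => Nat.factorial_pos _

theorem factorial_add_single_one (m : σ →₀ ℕ) (i : σ) :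
    (m + single i 1).factorial = (m i + 1) * m.factorial := by
  classical
  rw [factorial, factorial, ← mul_prod_erase' (m + single i 1) i _ (by simp),
    ← mul_prod_erase' m i _ (by simp), erase_add, erase_single, add_zero]
  simp [Nat.factorial_succ, mul_assoc]

end Finsupp

namespace MvPolynomial

open Finsupp

variable {σ R : Type*}

section CommSemiring

variable [CommSemiring R]

theorem sum_factorial_mul_coeff_mul_coeff_eq_of_subset (f g : MvPolynomial σ R)
    {s : Finset (σ →₀ ℕ)} (hs : f.support ⊆ s) :
    ∑ m ∈ f.support, (m.factorial : R) * coeff m f * coeff m g =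
      ∑ m ∈ s, (m.factorial : R) * coeff m f * coeff m g :=
  Finset.sum_subset hs fun m _ hm => by simp [notMem_support_iff.mp hm]

noncomputable def fischer : MvPolynomial σ R →ₗ[R] MvPolynomial σ R →ₗ[R] R :=
  LinearMap.mk₂ R
    (fun f g => ∑ m ∈ f.support, (m.factorial : R) * coeff m f * coeff m g)
    (fun f₁ f₂ g => by
      classical
      rw [sum_factorial_mul_coeff_mul_coeff_eq_of_subset _ _ (s := f₁.support ∪ f₂.support)
          support_add,
        sum_factorial_mul_coeff_mul_coeff_eq_of_subset _ _ Finset.subset_union_left,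
        sum_factorial_mul_coeff_mul_coeff_eq_of_subset f₂ _ Finset.subset_union_right,
        ← Finset.sum_add_distrib]
      simp only [coeff_add]
      exact Finset.sum_congr rfl fun _ _ => by ring)
    (fun c f g => by
      rw [sum_factorial_mul_coeff_mul_coeff_eq_of_subset _ _ support_smul, smul_eq_mul,
        Finset.mul_sum]
      simp only [coeff_smul, smul_eq_mul]
      exact Finset.sum_congr rfl fun _ _ => by ring)
    (fun f g₁ g₂ => by
      simp only [coeff_add, ← Finset.sum_add_distrib]
      exact Finset.sum_congr rfl fun _ _ => by ring)
    (fun c f g => by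
      simp only [coeff_smul, smul_eq_mul, Finset.mul_sum]
      exact Finset.sum_congr rfl fun _ _ => by ring)

theorem fischer_apply (f g : MvPolynomial σ R) :
    fischer f g = ∑ m ∈ f.support, (m.factorial : R) * coeff m f * coeff m g :=
  rfl

theorem fischer_X_mul (i : σ) (f g : MvPolynomial σ R) :
    fischer (X i * f) g = fischer f (pderiv i g) := by
  classical
  rw [fischer_apply, fischer_apply, support_X_mul, Finset.sum_map]
  refine Finset.sum_congr rfl fun m _ => ?_
  rw [addLeftEmbedding_apply, add_comm, coeff_X_mul', if_pos (by simp), add_tsub_cancel_right,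
    factorial_add_single_one, coeff_pderiv]
  push_cast
  ring

end CommSemiring

theorem fischer_self_pos [CommRing R] [LinearOrder R] [IsStrictOrderedRing R]
    {f : MvPolynomial σ R} (hf : f ≠ 0) : 0 < fischer f f := by
  refine Finset.sum_pos (fun m hm => ?_) (support_nonempty.mpr hf)
  have hw : (0 : R) < m.factorial := mod_cast m.factorial_pos
  rw [mul_assoc]
  exact mul_pos hw (mul_self_pos.mpr (mem_support_iff.mp hm))

section Homogeneous

variable [CommRing R]

theorem homogeneousSubmodule_eq_restrictSupport_finsuppAntidiag [Fintype σ] [DecidableEq σ]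
    (k : ℕ) :
    homogeneousSubmodule σ R k =
      restrictSupport R ((Finset.univ : Finset σ).finsuppAntidiag k : Set (σ →₀ ℕ)) := by
  rw [homogeneousSubmodule_eq_finsupp_supported]
  congr 1
  ext d
  simp [Finsupp.degree_eq_sum]

instance [Finite σ] (k : ℕ) : Module.Finite R (homogeneousSubmodule σ R k) :=
  Module.Finite.iff_fg.mpr (homogeneousSubmodule_fg σ R k)

theorem finrank_homogeneousSubmodule [Nontrivial R] [Fintype σ] (k : ℕ) :
    Module.finrank R (homogeneousSubmodule σ R k) = (Fintype.card σ + k - 1).choose k := by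
  classical
  rw [homogeneousSubmodule_eq_restrictSupport_finsuppAntidiag,
    Module.finrank_eq_card_basis (basisRestrictSupport R _)]
  simp [Finset.card_finsuppAntidiag_nat_eq_choose]

end Homogeneous

end MvPolynomial

section Laplacian

variable {n : ℕ}

theorem polyLaplacianLM_apply (f : MvPolynomial (Fin n) ℝ) :
    polyLaplacianLM n f = ∑ i, pderiv i (pderiv i f) := by
  simp [polyLaplacianLM]

theorem MvPolynomial.IsHomogeneous.polyLaplacianLM {f : MvPolynomial (Fin n) ℝ} {d : ℕ}
    (hf : f.IsHomogeneous (d + 2)) : (polyLaplacianLM n f).IsHomogeneous d := by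
  rw [polyLaplacianLM_apply]
  exact IsHomogeneous.sum _ _ _ fun i _ => hf.pderiv.pderiv

noncomputable def sumSqX (n : ℕ) : MvPolynomial (Fin n) ℝ := ∑ i, X i ^ 2

theorem isHomogeneous_sumSqX : (sumSqX n).IsHomogeneous 2 :=
  IsHomogeneous.sum _ _ _ fun i _ => isHomogeneous_X_pow i 2

theorem sumSqX_ne_zero (hn : n ≠ 0) : sumSqX n ≠ 0 := by
  intro h
  have := congrArg (eval fun _ => (1 : ℝ)) h
  simp [sumSqX] at this
  exact hn this

theorem fischer_sumSqX_mul (f g : MvPolynomial (Fin n) ℝ) :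
    fischer (sumSqX n * f) g = fischer f (polyLaplacianLM n g) := by
  simp only [sumSqX, Finset.sum_mul, map_sum, LinearMap.sum_apply,
    polyLaplacianLM_apply, sq, mul_assoc, fischer_X_mul]

theorem polyLaplacianLM_sumSqX_mul_ne_zero (hn : n ≠ 0) {f : MvPolynomial (Fin n) ℝ}
    (hf : f ≠ 0) : polyLaplacianLM n (sumSqX n * f) ≠ 0 := by
  intro h
  have hpos := fischer_self_pos (mul_ne_zero (sumSqX_ne_zero hn) hf)
  rw [fischer_sumSqX_mul, h, map_zero] at hpos
  exact lt_irrefl 0 hpos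

end Laplacian

section HomogeneousLaplacian

variable (n d : ℕ)

noncomputable def homogeneousLaplacian :
    homogeneousSubmodule (Fin n) ℝ (d + 2) →ₗ[ℝ] homogeneousSubmodule (Fin n) ℝ d :=
  (polyLaplacianLM n).restrict fun f hf =>
    (mem_homogeneousSubmodule d _).mpr ((mem_homogeneousSubmodule (d + 2) f).mp hf).polyLaplacianLM

noncomputable def homogeneousMulSumSqX :
    homogeneousSubmodule (Fin n) ℝ d →ₗ[ℝ] homogeneousSubmodule (Fin n) ℝ (d + 2) :=
  (LinearMap.mulLeft ℝ (sumSqX n)).restrict fun f hf => by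
    rw [mem_homogeneousSubmodule] at hf ⊢
    rw [LinearMap.mulLeft_apply, add_comm]
    exact isHomogeneous_sumSqX.mul hf

variable {n d}

theorem homogeneousLaplacian_surjective (hn : n ≠ 0) :
    Function.Surjective (homogeneousLaplacian n d) := by
  have hinj : Function.Injective (homogeneousLaplacian n d ∘ₗ homogeneousMulSumSqX n d) := by
    rw [← LinearMap.ker_eq_bot, LinearMap.ker_eq_bot']
    refine fun f hf => Subtype.ext ?_
    by_contra hf0
    exact polyLaplacianLM_sumSqX_mul_ne_zero hn hf0 (congrArg Subtype.val hf)
  rw [LinearMap.injective_iff_surjective, LinearMap.coe_comp] at hinj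
  exact hinj.of_comp

end HomogeneousLaplacian

theorem finrank_harmonicHomogeneous_add_finrank (p d : ℕ) :
    Module.finrank ℝ (harmonicHomogeneous p (d + 2)) +
        Module.finrank ℝ (homogeneousSubmodule (Fin (p + 1)) ℝ d) =
      Module.finrank ℝ (homogeneousSubmodule (Fin (p + 1)) ℝ (d + 2)) := by
  have hker : harmonicHomogeneous p (d + 2) =
      (LinearMap.ker (homogeneousLaplacian (p + 1) d)).map (Submodule.subtype _) := by
    rw [homogeneousLaplacian, LinearMap.ker_restrict, Submodule.map_comap_subtype]
    rfl
  rw [hker, Submodule.finrank_map_subtype_eq,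
    ← LinearMap.finrank_range_add_finrank_ker (homogeneousLaplacian (p + 1) d),
    LinearMap.range_eq_top.mpr (homogeneousLaplacian_surjective p.succ_ne_zero), finrank_top,
    add_comm]

theorem dim_harmonic_homogeneous_general (p k : ℕ) (hk : 2 ≤ k) :
    Module.finrank ℝ (harmonicHomogeneous p k) =
      (k + p).choose p - (k + p - 2).choose p := by
  obtain ⟨d, rfl⟩ := Nat.exists_eq_add_of_le' hk
  have h := finrank_harmonicHomogeneous_add_finrank p d
  rw [finrank_homogeneousSubmodule, finrank_homogeneousSubmodule, Fintype.card_fin,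
    show p + 1 + d - 1 = d + p by omega, show p + 1 + (d + 2) - 1 = d + 2 + p by omega,
    Nat.choose_symm_add, Nat.choose_symm_add] at h
  rw [show d + 2 + p - 2 = d + p by omega]
  omega

theorem dim_harmonic_homogeneous (p k : ℕ) (hp : 1 ≤ p) (hk : 2 ≤ k) :
    Module.finrank ℝ (harmonicHomogeneous p k) =
      (k + p).choose p - (k + p - 2).choose p :=
  dim_harmonic_homogeneous_general p k hk
end
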